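/- arXiv:math/0605577 — 12 statements merged into one kernel-verified Lean document; each statement's English description precedes it below -/
import Mathlib

section
/- The determinant of the (n+1)×(n+1) Bernstein–Vandermonde matrix A with entries A[i][j] = C(n,j)·(1-x_i)^{n-j}·x_i^j (rows indexed by i=1,...,n+1, columns by j=0,...,n) equals the product of all binomial coefficients C(n,0)·C(n,1)···C(n,n) times the product over all pairs 1 ≤ i < j ≤ n+1 of (x_j - x_i). -/
/-!
Column `j` of the matrix samples the Bernstein polynomial `b_j = C(n,j) X^j (1 - X)^(n-j)` at the
points `x i`, so the matrix factors as the Vandermonde matrix of the `x i` times the coefficient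
matrix of the `b_j`. Since `X^j ∣ b_j`, that coefficient matrix is lower triangular with diagonal
entries `C(n,j)`.
-/

open Polynomial

namespace Matrix

variable {R : Type*} [CommRing R]

theorem of_eval_eq_vandermonde_mul_of_coeff {m : ℕ} (v : Fin m → R) (p : Fin m → R[X])
    (h_deg : ∀ j, (p j).natDegree < m) :
    of (fun i j => (p j).eval (v i)) = vandermonde v * of (fun k j : Fin m => (p j).coeff k) := by
  ext i j
  rw [of_apply, mul_apply, eval_eq_sum_range' (h_deg j), ← Fin.sum_univ_eq_sum_range]
  simp only [vandermonde_apply, of_apply, mul_comm]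

end Matrix

namespace bernsteinPolynomial

variable {R : Type*} [CommRing R]

theorem natDegree_le (n ν : ℕ) : (bernsteinPolynomial R n ν).natDegree ≤ n := by
  rcases le_or_gt ν n with h | h
  · unfold bernsteinPolynomial
    compute_degree
    omega
  · simp [eq_zero_of_lt R h]

theorem coeff_eq_zero_of_lt {n ν k : ℕ} (h : k < ν) :
    (bernsteinPolynomial R n ν).coeff k = 0 := by
  rw [bernsteinPolynomial, mul_assoc, coeff_natCast_mul, coeff_X_pow_mul', if_neg (by omega),
    mul_zero]

theorem coeff_self (n ν : ℕ) : (bernsteinPolynomial R n ν).coeff ν = n.choose ν := by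
  rw [bernsteinPolynomial, mul_assoc, coeff_natCast_mul, coeff_X_pow_mul', if_pos le_rfl,
    Nat.sub_self, coeff_zero_eq_eval_zero]
  simp

theorem det_of_coeff (n : ℕ) :
    (Matrix.of fun k j : Fin (n + 1) => (bernsteinPolynomial R n j).coeff k).det =
      ∏ j : Fin (n + 1), (n.choose j : R) :=
  (Matrix.det_of_isLowerTriangular _ fun _ _ h => coeff_eq_zero_of_lt h).trans
    (Finset.prod_congr rfl fun j _ => coeff_self n j)

end bernsteinPolynomial

/-- The determinant of the (n+1)×(n+1) Bernstein–Vandermonde matrix equals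
the product of all binomial coefficients times the Vandermonde product. -/
theorem bernstein_vandermonde_det (n : ℕ) (x : Fin (n + 1) → ℝ)
    (A : Matrix (Fin (n + 1)) (Fin (n + 1)) ℝ)
    (hA : ∀ i j, A i j = (n.choose j : ℝ) * (1 - x i) ^ (n - (j : ℕ)) * x i ^ (j : ℕ)) :
    A.det = (∏ j : Fin (n + 1), (n.choose j : ℝ)) *
      ∏ i : Fin (n + 1), ∏ j ∈ Finset.Ioi i, (x j - x i) := by
  have hA_bernstein :
      A = Matrix.of fun i j : Fin (n + 1) => (bernsteinPolynomial ℝ n j).eval (x i) := by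
    ext i j
    simp only [hA, bernsteinPolynomial, eval_mul, eval_natCast, eval_pow, eval_X, eval_sub,
      eval_one, Matrix.of_apply]
    ring
  rw [hA_bernstein, Matrix.of_eval_eq_vandermonde_mul_of_coeff _ _
      fun j => (bernsteinPolynomial.natDegree_le n j).trans_lt n.lt_succ_self,
    Matrix.det_mul, Matrix.det_vandermonde, bernsteinPolynomial.det_of_coeff, mul_comm]
end

section
/- If 0 < x_1 < x_2 < ... < x_{n+1} < 1, then the Bernstein–Vandermonde matrix A is nonsingular (its determinant is nonzero). -/
/-- If 0 < x_1 < ... < x_{n+1} < 1 then the Bernstein–Vandermonde matrix is nonsingular. -/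
theorem bernstein_vandermonde_nonsingular (n : ℕ) (x : Fin (n + 1) → ℝ)
    (hx : ∀ i, 0 < x i ∧ x i < 1) (hmono : StrictMono x)
    (A : Matrix (Fin (n + 1)) (Fin (n + 1)) ℝ)
    (hA : ∀ i j, A i j = (n.choose j : ℝ) * (1 - x i) ^ (n - (j : ℕ)) * x i ^ (j : ℕ)) :
    A.det ≠ 0 := by
  have h1 : ∀ i, (0:ℝ) < 1 - x i := fun i => by linarith [(hx i).2]
  set y : Fin (n + 1) → ℝ := fun i => x i / (1 - x i) with hy
  have hA' : A = Matrix.diagonal (fun i => (1 - x i) ^ n) * Matrix.vandermonde y *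
      Matrix.diagonal (fun j : Fin (n+1) => (n.choose j : ℝ)) := by
    ext i j
    rw [Matrix.mul_diagonal, Matrix.diagonal_mul, hA i j, Matrix.vandermonde]
    have hne : (1 - x i) ≠ 0 := ne_of_gt (h1 i)
    have hj : (j : ℕ) ≤ n := Nat.lt_succ_iff.mp j.isLt
    have hpow : (1 - x i) ^ (n - (j:ℕ)) * (1 - x i) ^ (j:ℕ) = (1 - x i) ^ n :=
      pow_sub_mul_pow _ hj
    simp only [Matrix.of_apply, hy]
    rw [div_pow]
    field_simp
    rw [← hpow]
    ring
  rw [hA', Matrix.det_mul, Matrix.det_mul, Matrix.det_diagonal, Matrix.det_diagonal,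
    Matrix.det_vandermonde]
  have hymono : StrictMono y := by
    intro i j hij
    have hxi := hx i
    have hxj := hx j
    have := hmono hij
    rw [hy]
    simp only
    rw [div_lt_div_iff₀ (h1 i) (h1 j)]
    nlinarith
  apply mul_ne_zero
  apply mul_ne_zero
  · exact Finset.prod_ne_zero_iff.mpr fun i _ => pow_ne_zero _ (ne_of_gt (h1 i))
  · refine Finset.prod_ne_zero_iff.mpr fun i _ => ?_
    refine Finset.prod_ne_zero_iff.mpr fun j hj => ?_
    have : y i < y j := hymono (Finset.mem_Ioi.mp hj)
    linarith
  · refine Finset.prod_ne_zero_iff.mpr fun j _ => ?_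
    exact_mod_cast Nat.choose_pos (Nat.lt_succ_iff.mp j.isLt) |>.ne'
end

section
/- If 0 < x_1 < x_2 < ... < x_{n+1} < 1, then the determinant of the Bernstein–Vandermonde matrix is strictly positive. -/
/-!
Writing `t = x / (1 - x)`, the Bernstein basis polynomial `C(n,j) (1-x)^(n-j) x^j` equals
`(1-x)^n · C(n,j) t^j`. So the Bernstein–Vandermonde matrix is the Vandermonde matrix of the
nodes `t_i = x_i / (1 - x_i)` with its rows scaled by `(1-x_i)^n > 0` and its columns by
`C(n,j) > 0`. The map `x ↦ x / (1 - x)` is increasing below `1`, so the `t_i` are increasing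
and the Vandermonde determinant `∏_{i<j} (t_j - t_i)` is positive.
-/

open Finset Matrix

theorem Matrix.det_vandermonde_pos {R : Type*} [CommRing R] [PartialOrder R]
    [IsStrictOrderedRing R] {n : ℕ} {v : Fin n → R} (hv : StrictMono v) :
    0 < (vandermonde v).det := by
  rw [det_vandermonde]
  exact prod_pos fun i _ => prod_pos fun j hj => sub_pos.mpr (hv (mem_Ioi.mp hj))

section

variable {K : Type*} [Field K]

theorem strictMonoOn_div_one_sub [LinearOrder K] [IsStrictOrderedRing K] :
    StrictMonoOn (fun y : K => y / (1 - y)) (Set.Iio 1) := by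
  intro a ha b hb hab
  have ha' : 0 < 1 - a := sub_pos.mpr ha
  have hb' : 0 < 1 - b := sub_pos.mpr hb
  rw [div_lt_div_iff₀ ha' hb']
  linarith

theorem choose_mul_one_sub_pow_mul_pow {n j : ℕ} (hj : j ≤ n) {y : K} (hy : y ≠ 1) :
    n.choose j * (1 - y) ^ (n - j) * y ^ j = (1 - y) ^ n * (n.choose j * (y / (1 - y)) ^ j) := by
  have hy' : 1 - y ≠ 0 := sub_ne_zero.mpr hy.symm
  rw [div_pow, ← Nat.sub_add_cancel hj, pow_add, Nat.add_sub_cancel]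
  field_simp

variable (K) in
def bernsteinVandermonde (n : ℕ) (x : Fin (n + 1) → K) : Matrix (Fin (n + 1)) (Fin (n + 1)) K :=
  of fun i j => (n.choose j : K) * (1 - x i) ^ (n - (j : ℕ)) * x i ^ (j : ℕ)

theorem det_bernsteinVandermonde {n : ℕ} {x : Fin (n + 1) → K} (hx : ∀ i, x i ≠ 1) :
    (bernsteinVandermonde K n x).det =
      (∏ i, (1 - x i) ^ n) * ((∏ j : Fin (n + 1), (n.choose j : K)) *
        (vandermonde fun i => x i / (1 - x i)).det) := by
  have hfactor : bernsteinVandermonde K n x = of fun i j => (1 - x i) ^ n *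
      (of fun i (j : Fin (n + 1)) => (n.choose j : K) *
        vandermonde (fun i => x i / (1 - x i)) i j) i j := by
    ext i j
    exact choose_mul_one_sub_pow_mul_pow (Fin.is_le j) (hx i)
  rw [hfactor, det_mul_column, det_mul_row]

end

/-- If 0 < x_1 < ... < x_{n+1} < 1 then the Bernstein–Vandermonde determinant is positive. -/
theorem bernstein_vandermonde_det_pos (n : ℕ) (x : Fin (n + 1) → ℝ)
    (hx : ∀ i, 0 < x i ∧ x i < 1) (hmono : StrictMono x)
    (A : Matrix (Fin (n + 1)) (Fin (n + 1)) ℝ)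
    (hA : ∀ i j, A i j = (n.choose j : ℝ) * (1 - x i) ^ (n - (j : ℕ)) * x i ^ (j : ℕ)) :
    0 < A.det := by
  obtain rfl : A = bernsteinVandermonde ℝ n x := Matrix.ext hA
  have hlt : ∀ i, x i < 1 := fun i => (hx i).2
  have hnodes : StrictMono fun i => x i / (1 - x i) := fun i j hij =>
    strictMonoOn_div_one_sub (hlt i) (hlt j) (hmono hij)
  rw [det_bernsteinVandermonde fun i => (hlt i).ne]
  refine mul_pos (prod_pos fun i _ => pow_pos (sub_pos.mpr (hlt i)) n) (mul_pos ?_ ?_)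
  · exact prod_pos fun j _ => Nat.cast_pos.mpr (Nat.choose_pos (Fin.is_le j))
  · exact det_vandermonde_pos hnodes
end

section
/- The minor of the Bernstein–Vandermonde matrix A formed by rows i, i+1, ..., i+j-1 and the first j columns (columns 1 through j) equals C(n,0)·C(n,1)···C(n,j-1) · Π_{l=i}^{i+j-1}(1-x_l)^{n-j+1} · Π_{i ≤ k < l ≤ i+j-1}(x_l - x_k). -/
/-!
Writing `t r = x (i + r)`, the entry in row `r` and column `c` factors as
`C(n, c) * (1 - t r) ^ (n + 1 - j) * (t r ^ c * (1 - t r) ^ (j - 1 - c))`.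
Pulling the column factors `C(n, c)` and the row factors `(1 - t r) ^ (n + 1 - j)` out of the
determinant leaves the projective Vandermonde matrix of `t` and `1 - t`, whose determinant is
`∏_{r < s} (t s (1 - t r) - t r (1 - t s)) = ∏_{r < s} (t s - t r)`.
-/

open Finset

namespace Matrix

theorem det_projVandermonde_one_sub {R : Type*} [CommRing R] {m : ℕ} (v : Fin m → R) :
    (projVandermonde v (1 - v)).det = ∏ r : Fin m, ∏ s ∈ Ioi r, (v s - v r) := by
  rw [det_projVandermonde]
  refine prod_congr rfl fun r _ => prod_congr rfl fun s _ => ?_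
  simp only [Pi.sub_apply, Pi.one_apply]
  ring

end Matrix

/-- Minor of the Bernstein–Vandermonde matrix with rows i,...,i+j-1 and the first
j columns (1-based indexing of the nodes x). -/
theorem bernstein_vandermonde_minor_rows_initial_cols (n i j : ℕ) (x : ℕ → ℝ)
    (hi : 1 ≤ i) (hij : i + j ≤ n + 2) :
    (Matrix.of fun r c : Fin j =>
        (n.choose c : ℝ) * (1 - x (i + r)) ^ (n - (c : ℕ)) * x (i + r) ^ (c : ℕ)).det =
      (∏ k ∈ Finset.range j, (n.choose k : ℝ)) *
        (∏ r : Fin j, (1 - x (i + r)) ^ (n + 1 - j)) *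
        ∏ r : Fin j, ∏ s ∈ Finset.Ioi r, (x (i + (s : ℕ)) - x (i + (r : ℕ))) := by
  set t : Fin j → ℝ := fun r => x (i + r)
  have hfactor : (Matrix.of fun r c : Fin j =>
        (n.choose c : ℝ) * (1 - t r) ^ (n - (c : ℕ)) * t r ^ (c : ℕ)) =
      Matrix.of fun r c : Fin j => (n.choose c : ℝ) * Matrix.of (fun r c : Fin j =>
        (1 - t r) ^ (n + 1 - j) * Matrix.projVandermonde t (1 - t) r c) r c := by
    ext r c
    have hexp : n - (c : ℕ) = (n + 1 - j) + (c.rev : ℕ) := by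
      rw [Fin.val_rev]; have := c.isLt; omega
    simp only [Matrix.of_apply]
    rw [Matrix.projVandermonde_apply, hexp, pow_add, Pi.sub_apply, Pi.one_apply]
    ring
  rw [hfactor, Matrix.det_mul_row, Matrix.det_mul_column, Matrix.det_projVandermonde_one_sub,
    Fin.prod_univ_eq_prod_range (fun k => (n.choose k : ℝ)), mul_assoc]
end

section
/- The minor of the transpose A^T of the Bernstein–Vandermonde matrix formed by rows i, i+1, ..., i+j-1 and the first j columns equals C(n,i-1)·C(n,i)···C(n,i+j-2) · Π_{l=1}^{j} x_l^{i-1} · Π_{l=1}^{j}(1-x_l)^{n-i-j+2} · Π_{1 ≤ k < l ≤ j}(x_l - x_k). -/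
/-!
Factoring `C(n, i - 1 + r)` out of row `r` and `x_c ^ (i - 1) * (1 - x_c) ^ (n + 2 - i - j)` out
of column `c` leaves the matrix `((1 - x_c) ^ (j - 1 - r) * x_c ^ r)`. Expanding each
`(1 - y) ^ (j - 1 - r) * y ^ r` in the monomial basis writes this matrix as an upper unitriangular
matrix times the transposed Vandermonde matrix, so its determinant is the Vandermonde determinant.
-/

open Finset Matrix

theorem Fin.prod_univ_val_add_one {M : Type*} [CommMonoid M] (j : ℕ) (f : ℕ → M) :
    ∏ c : Fin j, f (c + 1) = ∏ l ∈ Icc 1 j, f l := by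
  rw [Fin.prod_univ_eq_prod_range (fun c => f (c + 1)), range_eq_Ico, prod_Ico_add',
    zero_add, Ico_add_one_right_eq_Icc]

theorem Fin.prod_Ioi_val_add_one {M : Type*} [CommMonoid M] {j : ℕ} (a : Fin j) (f : ℕ → M) :
    ∏ b ∈ Ioi a, f (b + 1) = ∏ l ∈ Ioc ((a : ℕ) + 1) j, f l := by
  rw [← Ico_add_one_add_one_eq_Ioc, ← prod_Ico_add', Ico_add_one_left_eq_Ioo,
    ← Fin.map_valEmbedding_Ioi, prod_map]
  rfl

theorem Fin.prod_prod_Ioi_val_add_one {M : Type*} [CommMonoid M] (j : ℕ) (g : ℕ → ℕ → M) :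
    ∏ a : Fin j, ∏ b ∈ Ioi a, g (a + 1) (b + 1) =
      ∏ k ∈ Icc 1 j, ∏ l ∈ Ioc k j, g k l := by
  rw [← Fin.prod_univ_val_add_one]
  exact prod_congr rfl fun a _ => Fin.prod_Ioi_val_add_one a (g (a + 1))

variable {R : Type*} [CommRing R]

theorem one_sub_pow_mul_pow (k r : ℕ) (y : R) :
    (1 - y) ^ k * y ^ r = ∑ s ∈ range (k + 1), (-1) ^ s * (k.choose s : R) * y ^ (r + s) := by
  rw [sub_eq_neg_add, add_pow, sum_mul]
  refine sum_congr rfl fun s _ => ?_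
  rw [neg_pow, one_pow, pow_add]
  ring

variable (R) in
/-- Row `r` lists the monomial coefficients of `(1 - y) ^ (j - 1 - r) * y ^ r`. -/
def bernsteinCoeffMatrix (j : ℕ) : Matrix (Fin j) (Fin j) R :=
  of fun r m => if r ≤ m then (-1) ^ (m - r : ℕ) * ((j - 1 - r).choose (m - r) : R) else 0

theorem det_bernsteinCoeffMatrix (j : ℕ) : (bernsteinCoeffMatrix R j).det = 1 := by
  have htri : (bernsteinCoeffMatrix R j).IsUpperTriangular := fun r m hmr =>
    if_neg (not_le.mpr hmr)
  rw [det_of_isUpperTriangular htri]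
  exact prod_eq_one fun r _ => by simp [bernsteinCoeffMatrix]

theorem bernsteinCoeffMatrix_mul_vandermonde_transpose {j : ℕ} (y : Fin j → R) :
    bernsteinCoeffMatrix R j * (vandermonde y)ᵀ =
      of fun r c : Fin j => (1 - y c) ^ (j - 1 - (r : ℕ)) * y c ^ (r : ℕ) := by
  ext r c
  have hr := r.isLt
  rw [mul_apply, of_apply, one_sub_pow_mul_pow, show j - 1 - r + 1 = j - r by omega]
  simp only [bernsteinCoeffMatrix, of_apply, transpose_apply, vandermonde_apply, ite_mul, zero_mul]
  set g : ℕ → R := fun m => (-1) ^ (m - r) * ((j - 1 - r).choose (m - r) : R) * y c ^ m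
  rw [← sum_filter, filter_le_eq_Ici]
  calc ∑ a ∈ Ici r, g a = ∑ m ∈ Ico (r : ℕ) j, g m := by
        rw [← Fin.map_valEmbedding_Ici, sum_map]; rfl
    _ = _ := by rw [sum_Ico_eq_sum_range]; simp [g]

theorem det_one_sub_pow_mul_pow {j : ℕ} (y : Fin j → R) :
    (of fun r c : Fin j => (1 - y c) ^ (j - 1 - (r : ℕ)) * y c ^ (r : ℕ)).det =
      ∏ a, ∏ b ∈ Ioi a, (y b - y a) := by
  rw [← bernsteinCoeffMatrix_mul_vandermonde_transpose, det_mul, det_bernsteinCoeffMatrix,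
    det_transpose, det_vandermonde, one_mul]

theorem det_mul_one_sub_pow_mul_pow {j : ℕ} (a : Fin j → R) (p q : ℕ) (y : Fin j → R) :
    (of fun r c : Fin j =>
        a r * (1 - y c) ^ (q + (j - 1 - (r : ℕ))) * y c ^ (p + (r : ℕ))).det =
      (∏ r, a r) * (∏ c, y c ^ p) * (∏ c, (1 - y c) ^ q) *
        ∏ c, ∏ d ∈ Ioi c, (y d - y c) := by
  have hfactor :
      (of fun r c : Fin j => a r * (1 - y c) ^ (q + (j - 1 - (r : ℕ))) * y c ^ (p + (r : ℕ))) =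
      diagonal a * (of fun r c : Fin j => (1 - y c) ^ (j - 1 - (r : ℕ)) * y c ^ (r : ℕ)) *
        diagonal fun c => y c ^ p * (1 - y c) ^ q := by
    ext r c
    simp only [of_apply, diagonal_mul, mul_diagonal, pow_add]
    ring
  rw [hfactor, det_mul, det_mul, det_diagonal, det_diagonal, det_one_sub_pow_mul_pow,
    prod_mul_distrib]
  ring

/-- Minor of the transpose of the Bernstein–Vandermonde matrix with rows i,...,i+j-1
and the first j columns (1-based indexing of the nodes x). -/
theorem bernstein_vandermonde_transpose_minor (n i j : ℕ) (x : ℕ → ℝ)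
    (hi : 1 ≤ i) (hij : i + j ≤ n + 2) :
    (Matrix.of fun r c : Fin j =>
        (n.choose (i - 1 + (r : ℕ)) : ℝ) * (1 - x ((c : ℕ) + 1)) ^ (n - (i - 1 + (r : ℕ))) *
          x ((c : ℕ) + 1) ^ (i - 1 + (r : ℕ))).det =
      (∏ r : Fin j, (n.choose (i - 1 + (r : ℕ)) : ℝ)) *
        (∏ l ∈ Finset.Icc 1 j, x l ^ (i - 1)) *
        (∏ l ∈ Finset.Icc 1 j, (1 - x l) ^ (n + 2 - i - j)) *
        ∏ k ∈ Finset.Icc 1 j, ∏ l ∈ Finset.Ioc k j, (x l - x k) := by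
  have hexp : ∀ r : Fin j, n - (i - 1 + (r : ℕ)) = (n + 2 - i - j) + (j - 1 - (r : ℕ)) := by
    omega
  simp_rw [hexp]
  rw [det_mul_one_sub_pow_mul_pow, Fin.prod_univ_val_add_one j (fun l => x l ^ (i - 1)),
    Fin.prod_univ_val_add_one j (fun l => (1 - x l) ^ (n + 2 - i - j)),
    Fin.prod_prod_Ioi_val_add_one j (fun k l => x l - x k)]
end

section
/- If 0 < x_1 < x_2 < ... < x_{n+1} < 1, then for every 1 ≤ i ≤ n+1 and 1 ≤ j ≤ n+1 with i+j-1 ≤ n+1, the minor of the Bernstein–Vandermonde matrix taken with rows i,...,i+j-1 and columns 1,...,j is strictly positive. -/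
/-! Factoring `(1 - x r) ^ n` out of row `r` and `n.choose c` out of column `c` leaves the
Vandermonde matrix of the odds ratios `t r = x r / (1 - x r)`. Since `t ↦ t / (1 - t)` is
strictly increasing on `(-∞, 1)`, the `t r` increase with `r`, so their Vandermonde
determinant `∏_{r < s} (t s - t r)` is positive, and so are the factored-out scalars. -/

open Finset Matrix

variable {K : Type*} [Field K]

theorem det_bernsteinVandermonde_s8 {m n : ℕ} (hm : m ≤ n + 1) (y : Fin m → K)
    (hy : ∀ r, y r ≠ 1) :
    (Matrix.of fun r c : Fin m =>
      (n.choose c : K) * (1 - y r) ^ (n - (c : ℕ)) * y r ^ (c : ℕ)).det =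
      (∏ r, (1 - y r) ^ n) * (∏ c : Fin m, (n.choose c : K)) *
        ∏ r, ∏ s ∈ Ioi r, (y s / (1 - y s) - y r / (1 - y r)) := by
  have hfactor : (Matrix.of fun r c : Fin m =>
      (n.choose c : K) * (1 - y r) ^ (n - (c : ℕ)) * y r ^ (c : ℕ)) =
      diagonal (fun r => (1 - y r) ^ n) * vandermonde (fun r => y r / (1 - y r)) *
        diagonal (fun c : Fin m => (n.choose c : K)) := by
    ext r c
    have hc : (c : ℕ) ≤ n := by omega
    have hne : 1 - y r ≠ 0 := sub_ne_zero.2 (hy r).symm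
    rw [of_apply, mul_diagonal, diagonal_mul, vandermonde_apply, div_pow,
      ← pow_sub_mul_pow _ hc]
    field_simp
  rw [hfactor, det_mul, det_mul, det_diagonal, det_diagonal, det_vandermonde]
  ring

theorem det_bernsteinVandermonde_pos [LinearOrder K] [IsStrictOrderedRing K] {m n : ℕ}
    (hm : m ≤ n + 1) {y : Fin m → K} (hy : StrictMono y) (hy1 : ∀ r, y r < 1) :
    0 < (Matrix.of fun r c : Fin m =>
      (n.choose c : K) * (1 - y r) ^ (n - (c : ℕ)) * y r ^ (c : ℕ)).det := by
  rw [det_bernsteinVandermonde_s8 hm y fun r => (hy1 r).ne]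
  refine mul_pos (mul_pos ?_ ?_) ?_
  · exact prod_pos fun r _ => pow_pos (sub_pos.2 (hy1 r)) n
  · exact prod_pos fun c _ => Nat.cast_pos.2 (Nat.choose_pos (by omega))
  · refine prod_pos fun r _ => prod_pos fun s hs => sub_pos.2 ?_
    exact strictMonoOn_div_one_sub (hy1 r) (hy1 s) (hy (mem_Ioi.1 hs))

theorem bernstein_vandermonde_minor_pos_general (n i j : ℕ) (x : ℕ → ℝ)
    (hx : ∀ k, 1 ≤ k → k ≤ n + 1 → 0 < x k ∧ x k < 1)
    (hmono : ∀ k l, 1 ≤ k → k < l → l ≤ n + 1 → x k < x l)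
    (hi : 1 ≤ i) (hij : i + j ≤ n + 2) :
    0 < (Matrix.of fun r c : Fin j =>
        (n.choose c : ℝ) * (1 - x (i + r)) ^ (n - (c : ℕ)) * x (i + r) ^ (c : ℕ)).det := by
  refine det_bernsteinVandermonde_pos (y := fun r => x (i + r)) (by omega) ?_ ?_
  · intro r s hrs
    exact hmono _ _ (by omega) (by simpa using hrs) (by omega)
  · exact fun r => (hx _ (by omega) (by omega)).2

/-- If 0 < x_1 < ... < x_{n+1} < 1, every minor of the Bernstein–Vandermonde matrix
with consecutive rows i,...,i+j-1 and initial consecutive columns 1,...,j is positive. -/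
theorem bernstein_vandermonde_minor_pos (n i j : ℕ) (x : ℕ → ℝ)
    (hx : ∀ k, 1 ≤ k → k ≤ n + 1 → 0 < x k ∧ x k < 1)
    (hmono : ∀ k l, 1 ≤ k → k < l → l ≤ n + 1 → x k < x l)
    (hi : 1 ≤ i) (hj : 1 ≤ j) (hij : i + j ≤ n + 2) :
    0 < (Matrix.of fun r c : Fin j =>
        (n.choose c : ℝ) * (1 - x (i + r)) ^ (n - (c : ℕ)) * x (i + r) ^ (c : ℕ)).det :=
  bernstein_vandermonde_minor_pos_general n i j x hx hmono hi hij
end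

section
/- If 0 < x_1 < ... < x_{n+1} < 1, the multipliers of the Neville elimination of the Bernstein–Vandermonde matrix A, defined as m_{i,j} = p_{i,j}/p_{i-1,j} where p_{i,j} = det A[i-j+1,...,i | 1,...,j] / det A[i-j+1,...,i-1 | 1,...,j-1], satisfy m_{i,j} = (1-x_i)^{n-j+1}·(1-x_{i-j})·Π_{k=1}^{j-1}(x_i - x_{i-k}) / ( (1-x_{i-1})^{n-j+2}·Π_{k=2}^{j}(x_{i-1} - x_{i-k}) ) for 1 ≤ j ≤ n and j+1 ≤ i ≤ n+1. -/
/-!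
Pulling `(1 - x_a) ^ (n + 1 - j)` out of the rows and `C(n, c)` out of the columns of a
`j × j` initial minor leaves the projective Vandermonde matrix of the pairs `(x_a, 1 - x_a)`,
whose determinant is `∏_{a < b} (x_b (1 - x_a) - x_a (1 - x_b)) = ∏_{a < b} (x_b - x_a)`.
Hence every minor, every pivot (a ratio of consecutive minors) and every multiplier is an
explicit product, and the quotient of two consecutive pivots telescopes to the stated formula.
-/

/-- Minor of the Bernstein–Vandermonde matrix with rows r,...,r+j-1 and columns 1,...,j
(1-based paper indexing; column c of the matrix corresponds to Bernstein index c-1). -/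
noncomputable def bvMinor (n : ℕ) (x : ℕ → ℝ) (r j : ℕ) : ℝ :=
  (Matrix.of fun a c : Fin j =>
    (n.choose c : ℝ) * (1 - x (r + (a : ℕ))) ^ (n - (c : ℕ)) * x (r + (a : ℕ)) ^ (c : ℕ)).det

/-- Neville pivot p_{i,j} = det A[i-j+1..i | 1..j] / det A[i-j+1..i-1 | 1..j-1]. -/
noncomputable def bvPivot (n : ℕ) (x : ℕ → ℝ) (i j : ℕ) : ℝ :=
  bvMinor n x (i - j + 1) j / bvMinor n x (i - j + 1) (j - 1)

/-- Neville multiplier m_{i,j} = p_{i,j}/p_{i-1,j}. -/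
noncomputable def bvMult (n : ℕ) (x : ℕ → ℝ) (i j : ℕ) : ℝ :=
  bvPivot n x i j / bvPivot n x (i - 1) j

open Finset

section Products

variable {M : Type*} [CommMonoid M]

theorem prod_range_prod_Ioo_succ (f : ℕ → ℕ → M) (j : ℕ) :
    ∏ a ∈ range (j + 1), ∏ b ∈ Ioo a (j + 1), f a b =
      (∏ a ∈ range j, ∏ b ∈ Ioo a j, f a b) * ∏ a ∈ range j, f a j := by
  rw [prod_range_succ, Ioo_add_one_right_eq_Ioc, Ioc_self, prod_empty, mul_one,
    ← prod_mul_distrib]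
  refine prod_congr rfl fun a ha => ?_
  rw [Ioo_add_one_right_eq_Ioc, ← Ioo_insert_right (mem_range.mp ha),
    prod_insert right_notMem_Ioo, mul_comm]

theorem Fin.prod_univ_prod_Ioi_eq_prod_range_prod_Ioo (f : ℕ → ℕ → M) (j : ℕ) :
    ∏ a : Fin j, ∏ b ∈ Ioi a, f a b = ∏ a ∈ range j, ∏ b ∈ Ioo a j, f a b := by
  rw [← Fin.prod_univ_eq_prod_range (fun a => ∏ b ∈ Ioo a j, f a b)]
  refine prod_congr rfl fun a _ => ?_
  rw [← Fin.map_valEmbedding_Ioi, prod_map]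
  rfl

theorem prod_Icc_sub_eq_prod_range (g : ℕ → M) {s t d : ℕ} (m : ℕ) (h : t + m + d = s) :
    ∏ k ∈ Icc (d + 1) (m + d), g (s - k) = ∏ a ∈ range m, g (t + a) := by
  refine prod_nbij' (fun k => m + d - k) (fun a => m + d - a) ?_ ?_ ?_ ?_ fun k hk => ?_
  all_goals simp only [mem_Icc, mem_range] at *
  any_goals intro k hk; omega
  exact congrArg g (by omega)

end Products

theorem bvMinor_eq_prod (n : ℕ) (x : ℕ → ℝ) (r : ℕ) {j : ℕ} (hj : j ≤ n + 1) :
    bvMinor n x r j =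
      (∏ c ∈ range j, (n.choose c : ℝ)) * (∏ a ∈ range j, (1 - x (r + a))) ^ (n + 1 - j) *
        ∏ a ∈ range j, ∏ b ∈ Ioo a j, (x (r + b) - x (r + a)) := by
  have hfactor : (Matrix.of fun a c : Fin j =>
      (n.choose c : ℝ) * (1 - x (r + a)) ^ (n - c) * x (r + a) ^ (c : ℕ)) =
      Matrix.of fun (a c : Fin j) => (n.choose c : ℝ) *
        Matrix.of (fun (a c : Fin j) => (1 - x (r + a)) ^ (n + 1 - j) *
          Matrix.projVandermonde (fun a => x (r + a)) (fun a => 1 - x (r + a)) a c) a c := by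
    ext a c
    simp only [Matrix.of_apply, Matrix.projVandermonde_apply, Fin.val_rev]
    rw [show n - c = (n + 1 - j) + (j - (c + 1)) by omega, pow_add]
    ring
  rw [bvMinor, hfactor, Matrix.det_mul_row, Matrix.det_mul_column, Matrix.det_projVandermonde,
    Fin.prod_univ_eq_prod_range (fun c => (n.choose c : ℝ)),
    Fin.prod_univ_eq_prod_range (fun a => (1 - x (r + a)) ^ (n + 1 - j)), prod_pow,
    Fin.prod_univ_prod_Ioi_eq_prod_range_prod_Ioo
      (fun a b => x (r + b) * (1 - x (r + a)) - x (r + a) * (1 - x (r + b))), ← mul_assoc]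
  exact congrArg _ (prod_congr rfl fun a _ => prod_congr rfl fun b _ => by ring)

theorem bvMinor_ne_zero {n r j : ℕ} {x : ℕ → ℝ} (hj : j ≤ n + 1)
    (hx : ∀ k ∈ Set.Ico r (r + j), x k ≠ 1) (hinj : Set.InjOn x (Set.Ico r (r + j))) :
    bvMinor n x r j ≠ 0 := by
  rw [bvMinor_eq_prod n x r hj]
  refine mul_ne_zero (mul_ne_zero ?_ (pow_ne_zero _ ?_)) ?_ <;> refine prod_ne_zero_iff.mpr ?_
  · exact fun c hc => Nat.cast_ne_zero.mpr (Nat.choose_pos (by grind)).ne'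
  · exact fun a ha => sub_ne_zero.mpr (hx (r + a) (by grind)).symm
  · refine fun a ha => prod_ne_zero_iff.mpr fun b hb => sub_ne_zero.mpr fun h => ?_
    have := hinj (by grind) (by grind) h
    grind

theorem bvPivot_eq {n m s : ℕ} {x : ℕ → ℝ} (hs : 1 ≤ s) (hm : m ≤ n)
    (hx : ∀ k ∈ Set.Ico s (s + m), x k ≠ 1) (hinj : Set.InjOn x (Set.Ico s (s + m))) :
    bvPivot n x (s + m) (m + 1) =
      n.choose m * (1 - x (s + m)) ^ (n - m) * (∏ a ∈ range m, (x (s + m) - x (s + a))) /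
        ∏ a ∈ range m, (1 - x (s + a)) := by
  have hM : bvMinor n x s m ≠ 0 := bvMinor_ne_zero (by omega) hx hinj
  rw [bvMinor_eq_prod n x s (by omega)] at hM
  obtain ⟨⟨hC, hU⟩, hV⟩ := by simpa only [mul_ne_zero_iff] using hM
  replace hU := ne_zero_pow (by omega) hU
  rw [bvPivot, show s + m - (m + 1) + 1 = s by omega, Nat.add_sub_cancel,
    bvMinor_eq_prod n x s (j := m + 1) (by omega), bvMinor_eq_prod n x s (j := m) (by omega),
    prod_range_succ, prod_range_succ, prod_range_prod_Ioo_succ,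
    show n + 1 - (m + 1) = n - m by omega, show n + 1 - m = n - m + 1 by omega, mul_pow]
  field_simp
  ring

theorem bvMult_eq {n m r : ℕ} {x : ℕ → ℝ} (hr : 1 ≤ r) (hm : m ≤ n)
    (hx : ∀ k ∈ Set.Ico r (r + m + 1), x k ≠ 1) (hinj : Set.InjOn x (Set.Ico r (r + m + 1))) :
    bvMult n x (r + 1 + m) (m + 1) =
      (1 - x (r + 1 + m)) ^ (n - m) * (1 - x r) *
          (∏ a ∈ range m, (x (r + 1 + m) - x (r + 1 + a))) /
        ((1 - x (r + m)) ^ (n - m + 1) * ∏ a ∈ range m, (x (r + m) - x (r + a))) := by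
  have hnext : Set.Ico (r + 1) (r + 1 + m) ⊆ Set.Ico r (r + m + 1) := by grind
  have hprev : Set.Ico r (r + m) ⊆ Set.Ico r (r + m + 1) := by grind
  rw [bvMult, show r + 1 + m - 1 = r + m by omega,
    bvPivot_eq (by omega) hm (fun k hk => hx k (hnext hk)) (hinj.mono hnext),
    bvPivot_eq hr hm (fun k hk => hx k (hprev hk)) (hinj.mono hprev)]
  have hu : ∀ k ∈ Set.Ico r (r + m + 1), 1 - x k ≠ 0 :=
    fun k hk => sub_ne_zero.mpr (hx k hk).symm
  have hC : (n.choose m : ℝ) ≠ 0 := Nat.cast_ne_zero.mpr (Nat.choose_pos hm).ne'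
  have hum : 1 - x (r + m) ≠ 0 := hu _ (by grind)
  have hU : ∏ a ∈ range m, (1 - x (r + 1 + a)) ≠ 0 :=
    prod_ne_zero_iff.mpr fun a ha => hu _ (by grind)
  have hG : ∏ a ∈ range m, (x (r + m) - x (r + a)) ≠ 0 :=
    prod_ne_zero_iff.mpr fun a ha => sub_ne_zero.mpr fun h => by
      have := hinj (by grind) (by grind) h
      grind
  have hshift : (∏ a ∈ range m, (1 - x (r + a))) * (1 - x (r + m)) =
      (1 - x r) * ∏ a ∈ range m, (1 - x (r + 1 + a)) := by
    rw [← prod_range_succ (fun a => 1 - x (r + a)), prod_range_succ', add_zero, mul_comm]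
    exact congrArg _ (prod_congr rfl fun a _ => by rw [add_comm a 1, add_assoc])
  rw [div_div_div_eq, div_eq_div_iff (by positivity) (by positivity), pow_succ]
  linear_combination (n.choose m : ℝ) * (1 - x (r + 1 + m)) ^ (n - m) *
    (∏ a ∈ range m, (x (r + 1 + m) - x (r + 1 + a))) * (1 - x (r + m)) ^ (n - m) *
    (∏ a ∈ range m, (x (r + m) - x (r + a))) * hshift

/-- Closed form of the multipliers of the Neville elimination of
the Bernstein–Vandermonde matrix. -/
theorem bernstein_vandermonde_multipliers (n : ℕ) (x : ℕ → ℝ)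
    (hx : ∀ k, 1 ≤ k → k ≤ n + 1 → 0 < x k ∧ x k < 1)
    (hmono : ∀ k l, 1 ≤ k → k < l → l ≤ n + 1 → x k < x l)
    (i j : ℕ) (hj1 : 1 ≤ j) (hj2 : j ≤ n) (hi1 : j + 1 ≤ i) (hi2 : i ≤ n + 1) :
    bvMult n x i j =
      (1 - x i) ^ (n + 1 - j) * (1 - x (i - j)) *
          (∏ k ∈ Finset.Icc 1 (j - 1), (x i - x (i - k))) /
        ((1 - x (i - 1)) ^ (n + 2 - j) *
          ∏ k ∈ Finset.Icc 2 j, (x (i - 1) - x (i - k))) := by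
  obtain ⟨m, rfl⟩ : ∃ m, j = m + 1 := ⟨j - 1, by omega⟩
  obtain ⟨r, rfl⟩ : ∃ r, i = r + 1 + m := ⟨i - m - 1, by omega⟩
  have hrows : Set.Ico r (r + m + 1) ⊆ Set.Icc 1 (n + 1) := by grind
  have hstrict : StrictMonoOn x (Set.Icc 1 (n + 1)) := fun k hk l hl hkl => hmono k l hk.1 hkl hl.2
  have hG1 : ∏ k ∈ Icc 1 (m + 1 - 1), (x (r + 1 + m) - x (r + 1 + m - k)) =
      ∏ a ∈ range m, (x (r + 1 + m) - x (r + 1 + a)) :=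
    prod_Icc_sub_eq_prod_range (fun y => x (r + 1 + m) - x y) m (by omega)
  have hG0 : ∏ k ∈ Icc 2 (m + 1), (x (r + 1 + m - 1) - x (r + 1 + m - k)) =
      ∏ a ∈ range m, (x (r + m) - x (r + a)) := by
    rw [show r + 1 + m - 1 = r + m by omega]
    exact prod_Icc_sub_eq_prod_range (fun y => x (r + m) - x y) m (by omega)
  rw [bvMult_eq (by omega) (by omega) (fun k hk => (hx k (hrows hk).1 (hrows hk).2).2.ne)
      (hstrict.injOn.mono hrows), hG1, hG0, show r + 1 + m - (m + 1) = r by omega,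
    show n + 1 - (m + 1) = n - m by omega, show n + 2 - (m + 1) = n - m + 1 by omega,
    show r + 1 + m - 1 = r + m by omega]
end

section
/- If 0 < x_1 < ... < x_{n+1} < 1, the multipliers of the Neville elimination of the transpose A^T of the Bernstein–Vandermonde matrix satisfy the simple closed form m̃_{i,j} = (n-i+2)·x_j / ((i-1)·(1-x_j)) for 1 ≤ j ≤ n and j+1 ≤ i ≤ n+1, where m̃_{i,j} = p̃_{i,j}/p̃_{i-1,j} and p̃_{i,j} = det A^T[i-j+1,...,i | 1,...,j] / det A^T[i-j+1,...,i-1 | 1,...,j-1]. -/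
/-- Minor of the transpose of the Bernstein–Vandermonde matrix with rows r,...,r+j-1
and columns 1,...,j (1-based paper indexing). -/
noncomputable def bvMinorT (n : ℕ) (x : ℕ → ℝ) (r j : ℕ) : ℝ :=
  (Matrix.of fun a c : Fin j =>
    (n.choose (r + (a : ℕ) - 1) : ℝ) * (1 - x ((c : ℕ) + 1)) ^ (n - (r + (a : ℕ) - 1)) *
      x ((c : ℕ) + 1) ^ (r + (a : ℕ) - 1)).det

/-- Neville pivot of the transpose. -/
noncomputable def bvPivotT (n : ℕ) (x : ℕ → ℝ) (i j : ℕ) : ℝ :=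
  bvMinorT n x (i - j + 1) j / bvMinorT n x (i - j + 1) (j - 1)

/-- Neville multiplier of the transpose. -/
noncomputable def bvMultT (n : ℕ) (x : ℕ → ℝ) (i j : ℕ) : ℝ :=
  bvPivotT n x i j / bvPivotT n x (i - 1) j

/-!
Write `t = x / (1 - x)`. Pulling the binomial coefficient out of each row and `(1 - x_c) ^ n`
out of each column turns a minor with row exponents `e, …, e + m - 1` into
`∏ C(n, e + a) · ∏ (1 - x_c) ^ n t_c ^ e` times the Vandermonde determinant of the `t_c`,
which is nonzero because the `x_c` are distinct. Hence moving the row window down by one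
multiplies the minor by `C(n, e + m) / C(n, e) · ∏ t_c`. In the multiplier all Vandermonde
factors cancel and only `C(n, i - 1) / C(n, i - 2) · t_j = (n - i + 2) / (i - 1) · t_j` survives.
-/

open Matrix Finset

section Bernstein

variable {K : Type*} [Field K]

def odds (y : K) : K := y / (1 - y)

lemma odds_injOn : Set.InjOn (odds : K → K) {y | y ≠ 1} := by
  intro y hy z hz h
  have hy' : 1 - y ≠ 0 := sub_ne_zero.mpr (Ne.symm hy)
  have hz' : 1 - z ≠ 0 := sub_ne_zero.mpr (Ne.symm hz)
  rw [odds, odds, div_eq_div_iff hy' hz'] at h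
  linear_combination h

lemma det_bernstein_rows (n e : ℕ) {m : ℕ} (y : Fin m → K) (hy : ∀ c, y c ≠ 1)
    (hm : e + m ≤ n + 1) :
    (of fun a c : Fin m => (n.choose (e + a) : K) * (1 - y c) ^ (n - (e + a)) * y c ^ (e + a)).det
      = (∏ a : Fin m, (n.choose (e + a) : K)) * (∏ c, (1 - y c) ^ n * odds (y c) ^ e) *
        (vandermonde fun c => odds (y c)).det := by
  have hsplit : (of fun a c : Fin m =>
      (n.choose (e + a) : K) * (1 - y c) ^ (n - (e + a)) * y c ^ (e + a))
      = of fun a c : Fin m => (n.choose (e + a) : K) *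
          (of fun a c : Fin m => ((1 - y c) ^ n * odds (y c) ^ e) *
            (of fun a c : Fin m => odds (y c) ^ (a : ℕ)) a c) a c := by
    ext a c
    have hc : 1 - y c ≠ 0 := sub_ne_zero.mpr (hy c).symm
    simp only [of_apply, odds, div_pow, pow_add]
    rw [pow_sub₀ _ hc (by omega), pow_add]
    field_simp
  have hvdm :
      (of fun a c : Fin m => odds (y c) ^ (a : ℕ)) = (vandermonde fun c => odds (y c))ᵀ := rfl
  rw [hsplit, det_mul_column, det_mul_row, hvdm, det_transpose, mul_assoc]

end Bernstein

lemma mul_prod_shift_eq_prod_mul {M : Type*} [CommMonoid M] (f : ℕ → M) (e m : ℕ) :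
    f e * ∏ a : Fin m, f (e + 1 + a) = (∏ a : Fin m, f (e + a)) * f (e + m) := by
  have hsucc := Fin.prod_univ_succ fun a : Fin (m + 1) => f (e + a)
  have hcast := Fin.prod_univ_castSucc fun a : Fin (m + 1) => f (e + a)
  simp only [Fin.val_zero, add_zero, Fin.val_succ, ← add_assoc, Fin.val_castSucc,
    Fin.val_last] at hsucc hcast
  rw [← hcast, hsucc]
  simp only [Nat.add_right_comm e 1]

section Minors

variable (n : ℕ) (x : ℕ → ℝ)

lemma bvMinorT_eq_vandermonde (e : ℕ) {m : ℕ} (hx : ∀ c : Fin m, x (c + 1) ≠ 1)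
    (hm : e + m ≤ n + 1) :
    bvMinorT n x (e + 1) m = (∏ a : Fin m, (n.choose (e + a) : ℝ)) *
      (∏ c : Fin m, (1 - x (c + 1)) ^ n * odds (x (c + 1)) ^ e) *
      (vandermonde fun c : Fin m => odds (x (c + 1))).det := by
  simp only [bvMinorT, Nat.add_right_comm e 1, Nat.add_sub_cancel]
  exact det_bernstein_rows n e (fun c : Fin m => x (c + 1)) hx hm

lemma bvMinorT_ne_zero (e : ℕ) {m : ℕ} (hx0 : ∀ c : Fin m, x (c + 1) ≠ 0)
    (hx1 : ∀ c : Fin m, x (c + 1) ≠ 1) (hinj : Function.Injective fun c : Fin m => x (c + 1))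
    (hm : e + m ≤ n + 1) : bvMinorT n x (e + 1) m ≠ 0 := by
  have hchoose : ∀ a : Fin m, (n.choose (e + a) : ℝ) ≠ 0 := fun a =>
    Nat.cast_ne_zero.mpr (Nat.choose_pos (by omega)).ne'
  have hweight : ∀ c : Fin m, (1 - x (c + 1)) ^ n * odds (x (c + 1)) ^ e ≠ 0 := fun c =>
    have hc : 1 - x (c + 1) ≠ 0 := sub_ne_zero.mpr (hx1 c).symm
    mul_ne_zero (pow_ne_zero _ hc) (pow_ne_zero _ (div_ne_zero (hx0 c) hc))
  have hodds : Function.Injective fun c : Fin m => odds (x (c + 1)) := fun c d h =>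
    hinj (odds_injOn (hx1 c) (hx1 d) h)
  rw [bvMinorT_eq_vandermonde n x e hx1 hm]
  exact mul_ne_zero (mul_ne_zero (prod_ne_zero_iff.mpr fun a _ => hchoose a)
    (prod_ne_zero_iff.mpr fun c _ => hweight c)) (det_vandermonde_ne_zero_iff.mpr hodds)

lemma choose_mul_bvMinorT_shift (e : ℕ) {m : ℕ} (hx : ∀ c : Fin m, x (c + 1) ≠ 1)
    (hm : e + m ≤ n) :
    (n.choose e : ℝ) * bvMinorT n x (e + 2) m
      = n.choose (e + m) * (∏ c : Fin m, odds (x (c + 1))) * bvMinorT n x (e + 1) m := by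
  have hchoose := mul_prod_shift_eq_prod_mul (fun a => (n.choose a : ℝ)) e m
  have hweight : ∏ c : Fin m, (1 - x (c + 1)) ^ n * odds (x (c + 1)) ^ (e + 1)
      = (∏ c : Fin m, odds (x (c + 1))) *
          ∏ c : Fin m, (1 - x (c + 1)) ^ n * odds (x (c + 1)) ^ e := by
    rw [← prod_mul_distrib]
    exact prod_congr rfl fun c _ => by ring
  rw [bvMinorT_eq_vandermonde n x (e + 1) hx (by omega),
    bvMinorT_eq_vandermonde n x e hx (by omega), hweight]
  linear_combination (∏ c : Fin m, odds (x (c + 1))) *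
    (∏ c : Fin m, (1 - x (c + 1)) ^ n * odds (x (c + 1)) ^ e) *
    (vandermonde fun c : Fin m => odds (x (c + 1))).det * hchoose

lemma bvMultT_eq_choose_ratio (k m : ℕ) (hx0 : ∀ c : Fin (m + 1), x (c + 1) ≠ 0)
    (hx1 : ∀ c : Fin (m + 1), x (c + 1) ≠ 1)
    (hinj : Function.Injective fun c : Fin (m + 1) => x (c + 1)) (hkm : k + m + 1 ≤ n) :
    bvMultT n x (m + 2 + k) (m + 1)
      = n.choose (k + m + 1) / n.choose (k + m) * odds (x (m + 1)) := by
  have hx0' : ∀ c : Fin m, x (c + 1) ≠ 0 := fun c => hx0 c.castSucc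
  have hx1' : ∀ c : Fin m, x (c + 1) ≠ 1 := fun c => hx1 c.castSucc
  have hinj' : Function.Injective fun c : Fin m => x (c + 1) :=
    hinj.comp (Fin.castSucc_injective m)
  have hT : ∏ c : Fin (m + 1), odds (x (c + 1))
      = (∏ c : Fin m, odds (x (c + 1))) * odds (x (m + 1)) := Fin.prod_univ_castSucc _
  have hTne : ∏ c : Fin m, odds (x (c + 1)) ≠ 0 :=
    prod_ne_zero_iff.mpr fun c _ => div_ne_zero (hx0' c) (sub_ne_zero.mpr (hx1' c).symm)
  have hnext := choose_mul_bvMinorT_shift n x k hx1 (by omega)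
  have hprev := choose_mul_bvMinorT_shift n x k hx1' (by omega)
  have hDnext := bvMinorT_ne_zero n x k hx0 hx1 hinj (by omega)
  have hDprev := bvMinorT_ne_zero n x k hx0' hx1' hinj' (by omega)
  have hck : (n.choose k : ℝ) ≠ 0 := Nat.cast_ne_zero.mpr (Nat.choose_pos (by omega)).ne'
  rw [bvMultT, show m + 2 + k - 1 = m + 1 + k by omega, bvPivotT, bvPivotT,
    show m + 2 + k - (m + 1) + 1 = k + 2 by omega, show m + 1 + k - (m + 1) + 1 = k + 1 by omega,
    Nat.add_sub_cancel]
  rw [← add_assoc, hT] at hnext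
  rw [eq_div_of_mul_eq hck ((mul_comm _ _).trans hnext),
    eq_div_of_mul_eq hck ((mul_comm _ _).trans hprev)]
  field_simp

end Minors

theorem bernstein_vandermonde_transpose_multipliers_general (n : ℕ) (x : ℕ → ℝ)
    (hx : ∀ k, 1 ≤ k → k ≤ n + 1 → 0 < x k ∧ x k < 1)
    (hmono : ∀ k l, 1 ≤ k → k < l → l ≤ n + 1 → x k < x l)
    (i j : ℕ) (hj1 : 1 ≤ j) (hi1 : j + 1 ≤ i) (hi2 : i ≤ n + 1) :
    bvMultT n x i j = ((n : ℝ) - i + 2) * x j / (((i : ℝ) - 1) * (1 - x j)) := by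
  obtain ⟨m, rfl⟩ : ∃ m, j = m + 1 := ⟨j - 1, by omega⟩
  obtain ⟨k, rfl⟩ : ∃ k, i = m + 2 + k := ⟨i - (m + 2), by omega⟩
  have hx0 : ∀ c : Fin (m + 1), x (c + 1) ≠ 0 := fun c => (hx _ (by omega) (by omega)).1.ne'
  have hx1 : ∀ c : Fin (m + 1), x (c + 1) ≠ 1 := fun c => (hx _ (by omega) (by omega)).2.ne
  have hinj : Function.Injective fun c : Fin (m + 1) => x (c + 1) :=
    StrictMono.injective fun c d hcd => hmono _ _ (by omega) (by simpa using hcd) (by omega)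
  have hchoose : (n.choose (k + m + 1) : ℝ) * (k + m + 1) = n.choose (k + m) * (n - (k + m)) := by
    have h := congrArg (Nat.cast : ℕ → ℝ) (Nat.choose_succ_right_eq n (k + m))
    push_cast [Nat.cast_sub (show k + m ≤ n by omega)] at h
    exact h
  have hckm : (n.choose (k + m) : ℝ) ≠ 0 := Nat.cast_ne_zero.mpr (Nat.choose_pos (by omega)).ne'
  have hsub : 1 - x (m + 1) ≠ 0 := sub_ne_zero.mpr (hx1 (Fin.last m)).symm
  rw [bvMultT_eq_choose_ratio n x k m hx0 hx1 hinj (by omega), odds, div_mul_div_comm,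
    div_eq_div_iff (mul_ne_zero hckm hsub)
      (mul_ne_zero (sub_ne_zero.mpr (by norm_cast; omega)) hsub)]
  push_cast
  linear_combination x (m + 1) * (1 - x (m + 1)) * hchoose

/-- Closed form of the multipliers of the Neville elimination of the transpose of the
Bernstein–Vandermonde matrix: m̃_{i,j} = (n-i+2)·x_j / ((i-1)·(1-x_j)). -/
theorem bernstein_vandermonde_transpose_multipliers (n : ℕ) (x : ℕ → ℝ)
    (hx : ∀ k, 1 ≤ k → k ≤ n + 1 → 0 < x k ∧ x k < 1)
    (hmono : ∀ k l, 1 ≤ k → k < l → l ≤ n + 1 → x k < x l)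
    (i j : ℕ) (hj1 : 1 ≤ j) (hj2 : j ≤ n) (hi1 : j + 1 ≤ i) (hi2 : i ≤ n + 1) :
    bvMultT n x i j = ((n : ℝ) - i + 2) * x j / (((i : ℝ) - 1) * (1 - x j)) :=
  bernstein_vandermonde_transpose_multipliers_general n x hx hmono i j hj1 hi1 hi2
end

section
/- If 0 < x_1 < ... < x_{n+1} < 1, all multipliers m_{i,j} of the Neville elimination of the Bernstein–Vandermonde matrix A, all multipliers m̃_{i,j} of the Neville elimination of A^T, and all diagonal pivots p_{i,i} are strictly positive. -/
/-!
Each of the three quantities is a quotient of products of factors `1 - x k`, `x k`,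
differences `x l - x k` with `k < l`, and positive integers, so all of them are positive once
`0 < x k < 1` and the nodes increase.
-/

open Finset

namespace BernsteinVandermonde

/-- The multiplier `m i j` of the Neville elimination of the Bernstein–Vandermonde matrix. -/
noncomputable def multiplier (n : ℕ) (x : ℕ → ℝ) (i j : ℕ) : ℝ :=
  (1 - x i) ^ (n + 1 - j) * (1 - x (i - j)) * (∏ k ∈ Icc 1 (j - 1), (x i - x (i - k))) /
    ((1 - x (i - 1)) ^ (n + 2 - j) * ∏ k ∈ Icc 2 j, (x (i - 1) - x (i - k)))

/-- The multiplier `m̃ i j` of the Neville elimination of the transposed matrix. -/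
noncomputable def transposeMultiplier (n : ℕ) (x : ℕ → ℝ) (i j : ℕ) : ℝ :=
  ((n : ℝ) - i + 2) * x j / (((i : ℝ) - 1) * (1 - x j))

/-- The diagonal pivot `p i i`. -/
noncomputable def pivot (n : ℕ) (x : ℕ → ℝ) (i : ℕ) : ℝ :=
  (n.choose (i - 1) : ℝ) * (1 - x i) ^ (n + 1 - i) * (∏ k ∈ Ico 1 i, (x i - x k)) /
    ∏ k ∈ Icc 1 (i - 1), (1 - x k)

theorem prod_sub_pos {ι : Type*} {s : Finset ι} {a : ℝ} {b : ι → ℝ} (h : ∀ k ∈ s, b k < a) :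
    0 < ∏ k ∈ s, (a - b k) :=
  prod_pos fun k hk => sub_pos.mpr (h k hk)

variable {n : ℕ} {x : ℕ → ℝ}

theorem multiplier_pos (hx : ∀ k, 1 ≤ k → k ≤ n + 1 → x k < 1)
    (hmono : ∀ k l, 1 ≤ k → k < l → l ≤ n + 1 → x k < x l)
    {i j : ℕ} (hj : 1 ≤ j) (hji : j + 1 ≤ i) (hin : i ≤ n + 1) :
    0 < multiplier n x i j := by
  have hxi : 0 < 1 - x i := sub_pos.mpr (hx i (by omega) hin)
  have hxij : 0 < 1 - x (i - j) := sub_pos.mpr (hx (i - j) (by omega) (by omega))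
  have hxi₁ : 0 < 1 - x (i - 1) := sub_pos.mpr (hx (i - 1) (by omega) (by omega))
  have hnum : 0 < ∏ k ∈ Icc 1 (j - 1), (x i - x (i - k)) :=
    prod_sub_pos fun k hk => by
      rw [mem_Icc] at hk
      exact hmono (i - k) i (by omega) (by omega) hin
  have hden : 0 < ∏ k ∈ Icc 2 j, (x (i - 1) - x (i - k)) :=
    prod_sub_pos fun k hk => by
      rw [mem_Icc] at hk
      exact hmono (i - k) (i - 1) (by omega) (by omega) (by omega)
  unfold multiplier
  positivity

theorem transposeMultiplier_pos (hx : ∀ k, 1 ≤ k → k ≤ n + 1 → 0 < x k ∧ x k < 1)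
    {i j : ℕ} (hj : 1 ≤ j) (hji : j + 1 ≤ i) (hin : i ≤ n + 1) :
    0 < transposeMultiplier n x i j := by
  obtain ⟨hxj, hxj₁⟩ := hx j hj (by omega)
  have hrow : (0 : ℝ) < n - i + 2 := by
    have : (i : ℝ) ≤ n + 1 := by exact_mod_cast hin
    linarith
  have hcol : (0 : ℝ) < i - 1 := by
    have : (2 : ℝ) ≤ i := by exact_mod_cast (by omega : 2 ≤ i)
    linarith
  have : 0 < 1 - x j := sub_pos.mpr hxj₁
  unfold transposeMultiplier
  positivity

theorem pivot_pos (hx : ∀ k, 1 ≤ k → k ≤ n + 1 → x k < 1)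
    (hmono : ∀ k l, 1 ≤ k → k < l → l ≤ n + 1 → x k < x l)
    {i : ℕ} (hi : 1 ≤ i) (hin : i ≤ n + 1) :
    0 < pivot n x i := by
  have hchoose : 0 < (n.choose (i - 1) : ℝ) := by
    exact_mod_cast Nat.choose_pos (by omega : i - 1 ≤ n)
  have hxi : 0 < 1 - x i := sub_pos.mpr (hx i hi hin)
  have hnum : 0 < ∏ k ∈ Ico 1 i, (x i - x k) :=
    prod_sub_pos fun k hk => by
      rw [mem_Ico] at hk
      exact hmono k i hk.1 hk.2 hin
  have hden : 0 < ∏ k ∈ Icc 1 (i - 1), (1 - x k) :=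
    prod_sub_pos fun k hk => by
      rw [mem_Icc] at hk
      exact hx k hk.1 (by omega)
  unfold pivot
  positivity

end BernsteinVandermonde

/-- All multipliers of the Neville elimination of the Bernstein–Vandermonde matrix A,
all multipliers of the Neville elimination of Aᵀ, and all diagonal pivots are positive. -/
theorem bernstein_vandermonde_neville_positive (n : ℕ) (x : ℕ → ℝ)
    (hx : ∀ k, 1 ≤ k → k ≤ n + 1 → 0 < x k ∧ x k < 1)
    (hmono : ∀ k l, 1 ≤ k → k < l → l ≤ n + 1 → x k < x l) :
    (∀ i j : ℕ, 1 ≤ j → j ≤ n → j + 1 ≤ i → i ≤ n + 1 →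
      0 < (1 - x i) ^ (n + 1 - j) * (1 - x (i - j)) *
            (∏ k ∈ Finset.Icc 1 (j - 1), (x i - x (i - k))) /
          ((1 - x (i - 1)) ^ (n + 2 - j) *
            ∏ k ∈ Finset.Icc 2 j, (x (i - 1) - x (i - k)))) ∧
    (∀ i j : ℕ, 1 ≤ j → j ≤ n → j + 1 ≤ i → i ≤ n + 1 →
      0 < ((n : ℝ) - i + 2) * x j / (((i : ℝ) - 1) * (1 - x j))) ∧
    (∀ i : ℕ, 1 ≤ i → i ≤ n + 1 →
      0 < (n.choose (i - 1) : ℝ) * (1 - x i) ^ (n + 1 - i) *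
            (∏ k ∈ Finset.Ico 1 i, (x i - x k)) /
          ∏ k ∈ Finset.Icc 1 (i - 1), (1 - x k)) := by
  have hx₁ : ∀ k, 1 ≤ k → k ≤ n + 1 → x k < 1 := fun k h1 h2 => (hx k h1 h2).2
  exact ⟨fun i j hj _ hji hin => BernsteinVandermonde.multiplier_pos hx₁ hmono hj hji hin,
    fun i j hj _ hji hin => BernsteinVandermonde.transposeMultiplier_pos hx hj hji hin,
    fun i hi hin => BernsteinVandermonde.pivot_pos hx₁ hmono hi hin⟩
end

section
/- If 0 < x_1 < ... < x_{n+1} < 1, then every minor of the Bernstein–Vandermonde matrix A (determinant of any square submatrix obtained by choosing equal numbers of rows and columns) is strictly positive, i.e., A is strictly totally positive. -/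
open Polynomial Finset

/-- Between the roots of `q` in a finite set `S` one can find `|S| - 1` distinct roots of the
derivative of `q`. -/
lemma rolle_chain (q : Polynomial ℝ) : ∀ (m : ℕ) (S : Finset ℝ), S.card = m →
    (∀ x ∈ S, q.eval x = 0) → S.Nonempty →
    ∃ T : Finset ℝ, T.card + 1 = S.card ∧ ∀ y ∈ T,
      q.derivative.eval y = 0 ∧ (∃ x ∈ S, x < y) ∧ (∃ x ∈ S, y < x) := by
  intro m
  induction m with
  | zero => intro S hcard _ hne; exact absurd (Finset.card_ne_zero_of_mem hne.choose_spec) (by simp [hcard])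
  | succ m ih =>
    intro S hcard hroots hne
    rcases Nat.eq_zero_or_pos m with hm | hm
    · exact ⟨∅, by simp [hcard, hm], by simp⟩
    · -- S has at least two elements
      have hcard2 : 2 ≤ S.card := by omega
      set a := S.max' hne with ha
      have haS : a ∈ S := S.max'_mem hne
      set S₀ := S.erase a with hS₀
      have hS₀ne : S₀.Nonempty := by
        rw [hS₀, ← Finset.card_pos, Finset.card_erase_of_mem haS]; omega
      have hS₀card : S₀.card = m := by rw [hS₀, Finset.card_erase_of_mem haS, hcard]; omega
      set b := S₀.max' hS₀ne with hb
      have hbS₀ : b ∈ S₀ := S₀.max'_mem hS₀ne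
      have hbS : b ∈ S := Finset.mem_of_mem_erase hbS₀
      have hba : b < a := lt_of_le_of_ne (S.le_max' b hbS) (Finset.ne_of_mem_erase hbS₀)
      -- Rolle between b and a
      obtain ⟨c, hc, hc0⟩ := exists_deriv_eq_zero hba
        (q.continuous.continuousOn) ((hroots b hbS).trans (hroots a haS).symm)
      have hc0' : q.derivative.eval c = 0 := by
        have := Polynomial.deriv (x := c) (p := q)
        rw [← this]; exact hc0
      obtain ⟨T₀, hT₀card, hT₀⟩ := ih S₀ hS₀card (fun x hx => hroots x (Finset.mem_of_mem_erase hx)) hS₀ne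
      have hcT₀ : c ∉ T₀ := by
        intro hcmem
        obtain ⟨-, -, x, hxS₀, hcx⟩ := hT₀ c hcmem
        exact absurd (hcx.trans_le (S₀.le_max' x hxS₀)) (not_lt.2 hc.1.le)
      refine ⟨insert c T₀, ?_, ?_⟩
      · rw [Finset.card_insert_of_notMem hcT₀, hT₀card, hS₀card, hcard]
      · intro y hy
        rcases Finset.mem_insert.1 hy with rfl | hy
        · exact ⟨hc0', ⟨b, hbS, hc.1⟩, ⟨a, haS, hc.2⟩⟩
        · obtain ⟨h1, ⟨x1, hx1, hx1'⟩, ⟨x2, hx2, hx2'⟩⟩ := hT₀ y hy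
          exact ⟨h1, ⟨x1, Finset.mem_of_mem_erase hx1, hx1'⟩,
            ⟨x2, Finset.mem_of_mem_erase hx2, hx2'⟩⟩


section helper
variable (q : Polynomial ℝ)

/-- If the constant coefficient of `q` is nonzero, the derivative's support has one fewer
element. -/
lemma deriv_support_card (h0 : q.coeff 0 ≠ 0) :
    (Polynomial.derivative q).support.card + 1 = q.support.card := by
  have himg : (Polynomial.derivative q).support = (q.support.erase 0).image (· - 1) := by
    ext n
    simp only [Polynomial.mem_support_iff, Finset.mem_image, Finset.mem_erase,
      Polynomial.coeff_derivative]
    constructor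
    · intro h
      refine ⟨n + 1, ⟨by omega, ?_⟩, by omega⟩
      intro hc; rw [hc] at h; simp at h
    · rintro ⟨m, ⟨hm0, hm⟩, rfl⟩
      have : m - 1 + 1 = m := by omega
      rw [this]
      positivity
  rw [himg, Finset.card_image_of_injOn, Finset.card_erase_of_mem]
  · have : 0 ∈ q.support := Polynomial.mem_support_iff.2 h0
    have := Finset.card_pos.2 ⟨0, this⟩
    omega
  · exact Polynomial.mem_support_iff.2 h0
  · intro a ha b hb hab
    simp only [Finset.coe_erase, Set.mem_diff, Finset.mem_coe, Set.mem_singleton_iff] at ha hb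
    have ha0 : a ≠ 0 := ha.2
    have hb0 : b ≠ 0 := hb.2
    simp only at hab
    omega

end helper

/-- Generalized Descartes bound: a nonzero real polynomial with at most `N` nonzero
coefficients has fewer than `N` distinct positive roots. -/
lemma descartes_bound : ∀ (N : ℕ) (p : Polynomial ℝ), p ≠ 0 → p.support.card ≤ N →
    ∀ S : Finset ℝ, (∀ x ∈ S, 0 < x ∧ p.eval x = 0) → S.card < N := by
  intro N
  induction N with
  | zero =>
    intro p hp hsupp S _
    exact absurd (Finset.card_pos.2 ⟨p.natDegree, p.natDegree_mem_support_of_nonzero hp⟩)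
      (by omega)
  | succ N ih =>
    intro p hp hsupp S hS
    -- strip the trailing power of X
    set k := p.natTrailingDegree with hk
    obtain ⟨q, hq⟩ : (X : Polynomial ℝ) ^ k ∣ p := by
      rw [Polynomial.X_pow_dvd_iff]
      intro d hd
      exact Polynomial.coeff_eq_zero_of_lt_natTrailingDegree hd
    have hq0 : q.coeff 0 ≠ 0 := by
      have : p.coeff k ≠ 0 := by
        rw [hk, ← Polynomial.trailingCoeff]
        exact Polynomial.trailingCoeff_nonzero_iff_nonzero.2 hp
      rw [hq] at this
      have h2 := Polynomial.coeff_X_pow_mul q k 0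
      rw [zero_add] at h2
      rwa [h2] at this
    have hqne : q ≠ 0 := fun h => hp (by simp [hq, h])
    -- supports have the same size
    have hsuppeq : p.support = q.support.map ⟨(k + ·), add_right_injective k⟩ := by
      ext n
      simp only [Polynomial.mem_support_iff, Finset.mem_map, Function.Embedding.coeFn_mk]
      constructor
      · intro h
        have hnk : k ≤ n := by
          by_contra hc
          exact h (Polynomial.coeff_eq_zero_of_lt_natTrailingDegree (by omega))
        refine ⟨n - k, ?_, by omega⟩
        have : k + (n - k) = n := by omega
        have h2 := Polynomial.coeff_X_pow_mul q k (n - k)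
        rw [Nat.sub_add_cancel hnk] at h2
        rw [← hq] at h2
        rw [← h2]; exact h
      · rintro ⟨m, hm, rfl⟩
        have h2 := Polynomial.coeff_X_pow_mul q k m
        rw [hq, Nat.add_comm k m]
        rw [h2]
        exact hm
    have hqcard : q.support.card = p.support.card := by rw [hsuppeq, Finset.card_map]
    -- roots of p in the positives are roots of q
    have hSq : ∀ x ∈ S, 0 < x ∧ q.eval x = 0 := by
      intro x hx
      obtain ⟨hx0, hxe⟩ := hS x hx
      refine ⟨hx0, ?_⟩
      rw [hq, Polynomial.eval_mul, Polynomial.eval_pow, Polynomial.eval_X] at hxe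
      exact (mul_eq_zero.1 hxe).resolve_left (by positivity)
    rcases le_or_gt q.support.card 1 with hc1 | hc1
    · -- q is a nonzero constant; no positive roots at all
      have hqsupp : q.support = {0} := by
        have h0mem : (0 : ℕ) ∈ q.support := Polynomial.mem_support_iff.2 hq0
        apply Finset.eq_singleton_iff_unique_mem.2 ⟨h0mem, ?_⟩
        intro m hm
        by_contra hne
        have : ({0, m} : Finset ℕ) ⊆ q.support := by
          intro z hz; rcases Finset.mem_insert.1 hz with rfl | hz
          · exact h0mem
          · rwa [Finset.mem_singleton.1 hz]
        have := Finset.card_le_card this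
        rw [Finset.card_insert_of_notMem (by simpa using fun h => hne h.symm)] at this
        simp at this; omega
      have : S = ∅ := by
        by_contra hSne
        obtain ⟨x, hx⟩ := Finset.nonempty_of_ne_empty hSne
        obtain ⟨hx0, hxe⟩ := hSq x hx
        rw [Polynomial.eval_eq_sum, Polynomial.sum_def, hqsupp] at hxe
        simp at hxe
        exact hq0 hxe
      simp [this]
    · -- q has at least two terms; use Rolle and induction
      rcases S.eq_empty_or_nonempty with rfl | hSne
      · simp
      obtain ⟨T, hTcard, hT⟩ := rolle_chain q S.card S rfl (fun x hx => (hSq x hx).2) hSne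
      have hTroots : ∀ y ∈ T, 0 < y ∧ (Polynomial.derivative q).eval y = 0 := by
        intro y hy
        obtain ⟨h1, ⟨x, hxS, hxy⟩, -⟩ := hT y hy
        exact ⟨(hS x hxS).1.trans hxy, h1⟩
      have hdcard : (Polynomial.derivative q).support.card + 1 = q.support.card :=
        deriv_support_card q hq0
      have hdne : Polynomial.derivative q ≠ 0 := by
        intro h
        rw [h] at hdcard
        simp at hdcard
        omega
      have := ih (Polynomial.derivative q) hdne (by omega) T hTroots
      omega
/-- A generalized Vandermonde matrix at increasing positive nodes with strictly increasing
exponents has positive determinant. -/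
lemma gen_vandermonde_pos : ∀ (k : ℕ) (t : Fin k → ℝ) (e : Fin k → ℕ),
    StrictMono t → StrictMono e → (∀ i, 0 < t i) →
    0 < Matrix.det (Matrix.of fun i j => t i ^ e j) := by
  intro k
  induction k with
  | zero => intro t e _ _ _; simp [Matrix.det_isEmpty]
  | succ k ih =>
    intro t e ht he htpos
    rcases Nat.eq_zero_or_pos k with rfl | hk
    · rw [Matrix.det_fin_one]
      exact pow_pos (htpos 0) _
    -- the minors obtained by deleting the last row and the `j`-th column
    set D : Fin (k + 1) → ℝ := fun j =>
      Matrix.det (Matrix.of fun (i : Fin k) (j' : Fin k) =>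
        t i.castSucc ^ e (j.succAbove j')) with hD
    have hDpos : ∀ j, 0 < D j := fun j =>
      ih _ _ (ht.comp Fin.strictMono_castSucc) (he.comp (Fin.strictMono_succAbove j))
        (fun i => htpos _)
    -- the polynomial obtained by replacing the last node with a variable
    set p : Polynomial ℝ :=
      ∑ j : Fin (k + 1), Polynomial.C ((-1 : ℝ) ^ (k + (j : ℕ)) * D j) * Polynomial.X ^ (e j)
      with hp
    have hpeval : ∀ s : ℝ, p.eval s = Matrix.det (Matrix.of fun i j =>
        (Fin.snoc (fun i' : Fin k => t i'.castSucc) s : Fin (k + 1) → ℝ) i ^ e j) := by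
      intro s
      rw [Matrix.det_succ_row _ (Fin.last k)]
      rw [hp, Polynomial.eval_finset_sum]
      refine Finset.sum_congr rfl fun j _ => ?_
      have h1 : ((Matrix.of fun i j =>
          (Fin.snoc (fun i' : Fin k => t i'.castSucc) s : Fin (k + 1) → ℝ) i ^ e j).submatrix
            (Fin.last k).succAbove j.succAbove) =
          Matrix.of fun (i : Fin k) (j' : Fin k) => t i.castSucc ^ e (j.succAbove j') := by
        ext i j'
        simp [Fin.succAbove_last, Fin.snoc_castSucc]
      rw [h1]
      simp only [Polynomial.eval_mul, Polynomial.eval_C, Polynomial.eval_pow, Polynomial.eval_X,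
        Matrix.of_apply, Fin.snoc_last, Fin.val_last]
      ring
    have hCXcoeff : ∀ (a : ℝ) (n m : ℕ),
        (Polynomial.C a * Polynomial.X ^ n).coeff m = if m = n then a else 0 := by
      intro a n m
      rw [Polynomial.coeff_C_mul, Polynomial.coeff_X_pow]
      split <;> simp
    -- coefficients
    have hcoeff : ∀ j0 : Fin (k + 1), p.coeff (e j0) = (-1 : ℝ) ^ (k + (j0 : ℕ)) * D j0 := by
      intro j0
      rw [hp, Polynomial.finset_sum_coeff]
      rw [Finset.sum_eq_single j0]
      · rw [hCXcoeff]; simp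
      · intro j _ hj
        have h2 : e j ≠ e j0 := he.injective.ne hj
        rw [hCXcoeff, if_neg (Ne.symm h2)]
      · simp
    have hlastcoeff : p.coeff (e (Fin.last k)) = D (Fin.last k) := by
      rw [hcoeff]
      have h1 : ((-1 : ℝ)) ^ (k + ((Fin.last k : Fin (k + 1)) : ℕ)) = 1 := by
        rw [Fin.val_last, ← two_mul, pow_mul]; norm_num
      rw [h1, one_mul]
    have hpne : p ≠ 0 := by
      intro h
      rw [h] at hlastcoeff
      simp at hlastcoeff
      exact (hDpos (Fin.last k)).ne' hlastcoeff.symm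
    -- support bound
    have hsupp : p.support ⊆ Finset.image (fun j : Fin (k + 1) => e j) Finset.univ := by
      intro m hm
      rw [Polynomial.mem_support_iff] at hm
      by_contra hmem
      apply hm
      rw [hp, Polynomial.finset_sum_coeff]
      apply Finset.sum_eq_zero
      intro j _
      have h2 : e j ≠ m := fun h => hmem (Finset.mem_image.2 ⟨j, Finset.mem_univ j, h⟩)
      rw [hCXcoeff, if_neg (Ne.symm h2)]
    have hsuppcard : p.support.card ≤ k + 1 := by
      calc p.support.card ≤ (Finset.image (fun j : Fin (k + 1) => e j) Finset.univ).card :=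
            Finset.card_le_card hsupp
        _ ≤ (Finset.univ : Finset (Fin (k + 1))).card := Finset.card_image_le
        _ = k + 1 := by simp
    -- degree and leading coefficient
    have hndeg : p.natDegree = e (Fin.last k) := by
      apply le_antisymm
      · have hmem := p.natDegree_mem_support_of_nonzero hpne
        obtain ⟨j, -, hj⟩ := Finset.mem_image.1 (hsupp hmem)
        rw [← hj]
        exact he.monotone (Fin.le_last j)
      · exact Polynomial.le_natDegree_of_ne_zero (by rw [hlastcoeff]; exact (hDpos _).ne')
    have hlead : p.leadingCoeff = D (Fin.last k) := by
      rw [Polynomial.leadingCoeff, hndeg, hlastcoeff]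
    have helast : 0 < e (Fin.last k) := by
      have h0 : (0 : Fin (k + 1)) < Fin.last k := by
        rw [Fin.lt_iff_val_lt_val, Fin.val_last]; simpa using hk
      have := he h0
      omega
    have hdeg : 0 < p.degree := by
      rw [← Polynomial.natDegree_pos_iff_degree_pos, hndeg]
      exact helast
    have htend := Polynomial.tendsto_atTop_of_leadingCoeff_nonneg p hdeg
      (by rw [hlead]; exact (hDpos _).le)
    obtain ⟨b, hb1, hb2⟩ :=
      ((htend.eventually_gt_atTop 0).and (Filter.eventually_gt_atTop (t (Fin.last k)))).exists
    -- the known roots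
    set S : Finset ℝ := Finset.image (fun i : Fin k => t i.castSucc) Finset.univ with hS
    have hScard : S.card = k := by
      rw [hS, Finset.card_image_of_injective _
        (fun a b h => Fin.castSucc_injective k (ht.injective h))]
      simp
    have hSroots : ∀ x ∈ S, 0 < x ∧ p.eval x = 0 := by
      intro x hx
      obtain ⟨i, -, rfl⟩ := Finset.mem_image.1 hx
      refine ⟨htpos _, ?_⟩
      rw [hpeval]
      apply Matrix.det_zero_of_row_eq (i_ne_j := (Fin.castSucc_lt_last i).ne)
      funext j
      simp [Fin.snoc_castSucc, Fin.snoc_last]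
    -- no roots at or beyond `t (last)`
    have hkey : ∀ c : ℝ, t (Fin.last k) ≤ c → p.eval c ≠ 0 := by
      intro c hc hcev
      have hcS : c ∉ S := by
        intro hmem
        obtain ⟨i, -, hi⟩ := Finset.mem_image.1 hmem
        have h2 := ht (Fin.castSucc_lt_last i)
        linarith [hi ▸ h2]
      have hins : ∀ x ∈ insert c S, 0 < x ∧ p.eval x = 0 := by
        intro x hx
        rcases Finset.mem_insert.1 hx with rfl | hx
        · exact ⟨lt_of_lt_of_le (htpos _) hc, hcev⟩
        · exact hSroots x hx
      have := descartes_bound (k + 1) p hpne hsuppcard (insert c S) hins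
      rw [Finset.card_insert_of_notMem hcS, hScard] at this
      omega
    -- hence the evaluation at `t (last)` is positive
    have hposeval : 0 < p.eval (t (Fin.last k)) := by
      rcases lt_trichotomy (p.eval (t (Fin.last k))) 0 with hlt | heq | hgt
      · exfalso
        have hsub : Set.Ioo (p.eval (t (Fin.last k))) (p.eval b) ⊆
            (fun x => p.eval x) '' Set.Ioo (t (Fin.last k)) b :=
          intermediate_value_Ioo hb2.le (p.continuous.continuousOn)
        have h0mem : (0 : ℝ) ∈ Set.Ioo (p.eval (t (Fin.last k))) (p.eval b) := ⟨hlt, hb1⟩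
        obtain ⟨c, hcmem, hcev⟩ := hsub h0mem
        exact hkey c hcmem.1.le hcev
      · exact absurd heq (hkey _ le_rfl)
      · exact hgt
    have hfin : (Fin.snoc (fun i' : Fin k => t i'.castSucc) (t (Fin.last k)) :
        Fin (k + 1) → ℝ) = t := by
      funext i
      refine Fin.lastCases ?_ ?_ i
      · simp [Fin.snoc_last]
      · intro i'
        simp [Fin.snoc_castSucc]
    rw [hpeval, hfin] at hposeval
    exact hposeval

/-- The Bernstein–Vandermonde matrix with nodes 0 < x_1 < ... < x_{n+1} < 1 is strictly
totally positive: every minor is strictly positive. -/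
theorem bernstein_vandermonde_strictly_totally_positive (n : ℕ) (x : Fin (n + 1) → ℝ)
    (hx : ∀ i, 0 < x i ∧ x i < 1) (hmono : StrictMono x)
    (A : Matrix (Fin (n + 1)) (Fin (n + 1)) ℝ)
    (hA : ∀ i j, A i j = (n.choose j : ℝ) * (1 - x i) ^ (n - (j : ℕ)) * x i ^ (j : ℕ)) :
    ∀ (k : ℕ) (α β : Fin k → Fin (n + 1)), StrictMono α → StrictMono β →
      0 < (A.submatrix α β).det := by
  intro k α β hα hβ
  set y : Fin k → ℝ := fun i => x (α i) with hy
  have hy0 : ∀ i, 0 < y i := fun i => (hx (α i)).1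
  have hy1 : ∀ i, y i < 1 := fun i => (hx (α i)).2
  have h1y : ∀ i, (0 : ℝ) < 1 - y i := fun i => by linarith [hy1 i]
  set t : Fin k → ℝ := fun i => y i / (1 - y i) with htdef
  have htpos : ∀ i, 0 < t i := fun i => div_pos (hy0 i) (h1y i)
  have htmono : StrictMono t := by
    intro i j hij
    have h := hmono (hα hij)
    rw [htdef]
    simp only
    rw [div_lt_div_iff₀ (h1y i) (h1y j)]
    nlinarith [hy0 i, hy0 j, hy1 i, hy1 j]
  have hemono : StrictMono (fun j : Fin k => ((β j : ℕ))) := fun i j hij => hβ hij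
  set B : Matrix (Fin k) (Fin k) ℝ := Matrix.of fun i j => t i ^ ((β j : ℕ)) with hB
  have hentry : A.submatrix α β = Matrix.of fun i j => ((n.choose (β j) : ℕ) : ℝ) *
      (Matrix.of (fun i j => (1 - y i) ^ n * B i j) i j) := by
    ext i j
    simp only [Matrix.submatrix_apply, Matrix.of_apply]
    rw [hA]
    have hb : (β j : ℕ) ≤ n := Fin.is_le _
    have key : (1 - y i) ^ n * t i ^ ((β j : ℕ)) =
        (1 - y i) ^ (n - (β j : ℕ)) * y i ^ ((β j : ℕ)) := by
      have hpow : (1 - y i) ^ n = (1 - y i) ^ (n - (β j : ℕ)) * (1 - y i) ^ ((β j : ℕ)) := by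
        rw [← pow_add, Nat.sub_add_cancel hb]
      rw [hpow, mul_assoc, htdef]
      simp only
      rw [div_pow]
      congr 1
      rw [mul_div_assoc', mul_comm, mul_div_assoc, div_self (pow_ne_zero _ (h1y i).ne'), mul_one]
    rw [hB]
    simp only [Matrix.of_apply]
    rw [key]
    ring
  rw [hentry, Matrix.det_mul_row, Matrix.det_mul_column]
  have h1 : (0 : ℝ) < ∏ j, ((n.choose (β j) : ℕ) : ℝ) := by
    apply Finset.prod_pos
    intro j _
    exact_mod_cast Nat.choose_pos (Fin.is_le (β j))
  have h2 : (0 : ℝ) < ∏ i, (1 - y i) ^ n := by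
    apply Finset.prod_pos
    intro i _
    exact pow_pos (h1y i) n
  have h3 : 0 < B.det := gen_vandermonde_pos k t (fun j => ((β j : ℕ))) htmono hemono htpos
  positivity
end

section
/- For 1 ≤ i ≤ n, the diagonal pivots p_{i,i} of the Neville elimination of the Bernstein–Vandermonde matrix satisfy the recurrence: with q_{i,i} = C(n,i-1)/Π_{k=1}^{i-1}(1-x_k), one has q_{1,1} = 1, q_{i+1,i+1} = q_{i,i}·(n-i+1)/(i·(1-x_i)), and p_{i+1,i+1} = q_{i+1,i+1}·(1-x_{i+1})^{n-i}·Π_{k<i+1}(x_{i+1}-x_k). -/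
/-!
Both identities are formal: `pBV n x i` is `qBV n x i` times the two remaining factors, and the
step from `qBV n x i` to `qBV n x (i + 1)` multiplies the binomial coefficient by `(n - i + 1) / i`
and the denominator by `1 - x i`.
-/

/-- Closed form of the diagonal pivots p_{i,i} of the Neville elimination of the
Bernstein–Vandermonde matrix. -/
noncomputable def pBV (n : ℕ) (x : ℕ → ℝ) (i : ℕ) : ℝ :=
  (n.choose (i - 1) : ℝ) * (1 - x i) ^ (n + 1 - i) *
      (∏ k ∈ Finset.Ico 1 i, (x i - x k)) / ∏ k ∈ Finset.Icc 1 (i - 1), (1 - x k)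

/-- q_{i,i} = C(n,i-1)/Π_{k=1}^{i-1}(1-x_k). -/
noncomputable def qBV (n : ℕ) (x : ℕ → ℝ) (i : ℕ) : ℝ :=
  (n.choose (i - 1) : ℝ) / ∏ k ∈ Finset.Icc 1 (i - 1), (1 - x k)

-- The subtraction in `R` is harmless: for `n < k` both sides vanish.
theorem Nat.cast_choose_succ_mul_succ {R : Type*} [Ring R] (n k : ℕ) :
    (n.choose (k + 1) : R) * (k + 1) = n.choose k * (n - k) := by
  rcases le_or_gt k n with hkn | hnk
  · have h := congrArg (Nat.cast (R := R)) (Nat.choose_succ_right_eq n k)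
    push_cast [Nat.cast_sub hkn] at h
    exact h
  · simp [Nat.choose_eq_zero_of_lt hnk, Nat.choose_eq_zero_of_lt (hnk.trans (Nat.lt_succ_self k))]

theorem qBV_one (n : ℕ) (x : ℕ → ℝ) : qBV n x 1 = 1 := by
  simp [qBV]

theorem qBV_succ (n : ℕ) (x : ℕ → ℝ) {i : ℕ} (hi : 1 ≤ i) :
    qBV n x (i + 1) = qBV n x i * ((n : ℝ) - i + 1) / ((i : ℝ) * (1 - x i)) := by
  obtain ⟨k, rfl⟩ := Nat.exists_eq_add_of_le' hi
  rw [qBV, qBV, Nat.add_sub_cancel, Nat.add_sub_cancel, Nat.cast_succ,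
    Finset.prod_Icc_succ_top (Nat.le_add_left 1 k),
    ← mul_div_mul_right (n.choose (k + 1) : ℝ) _ k.cast_add_one_ne_zero,
    Nat.cast_choose_succ_mul_succ]
  simp only [div_eq_mul_inv, mul_inv]
  ring

theorem pBV_eq_qBV_mul (n : ℕ) (x : ℕ → ℝ) (i : ℕ) :
    pBV n x i = qBV n x i * (1 - x i) ^ (n + 1 - i) * ∏ k ∈ Finset.Ico 1 i, (x i - x k) := by
  rw [pBV, qBV]
  ring

theorem bernstein_vandermonde_pivot_recurrence_general (n : ℕ) (x : ℕ → ℝ) :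
    qBV n x 1 = 1 ∧
    ∀ i, 1 ≤ i → i ≤ n →
      qBV n x (i + 1) = qBV n x i * ((n : ℝ) - i + 1) / ((i : ℝ) * (1 - x i)) ∧
      pBV n x (i + 1) =
        qBV n x (i + 1) * (1 - x (i + 1)) ^ (n - i) *
          ∏ k ∈ Finset.Icc 1 i, (x (i + 1) - x k) := by
  refine ⟨qBV_one n x, fun i hi _ => ⟨qBV_succ n x hi, ?_⟩⟩
  rw [pBV_eq_qBV_mul, Nat.add_sub_add_right, Finset.Ico_add_one_right_eq_Icc]

/-- Recurrence for the diagonal pivots of the Neville elimination of the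
Bernstein–Vandermonde matrix. -/
theorem bernstein_vandermonde_pivot_recurrence (n : ℕ) (x : ℕ → ℝ)
    (hx : ∀ k, 1 ≤ k → k ≤ n + 1 → 0 < x k ∧ x k < 1)
    (hmono : ∀ k l, 1 ≤ k → k < l → l ≤ n + 1 → x k < x l) :
    qBV n x 1 = 1 ∧
    ∀ i, 1 ≤ i → i ≤ n →
      qBV n x (i + 1) = qBV n x i * ((n : ℝ) - i + 1) / ((i : ℝ) * (1 - x i)) ∧
      pBV n x (i + 1) =
        qBV n x (i + 1) * (1 - x (i + 1)) ^ (n - i) *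
          ∏ k ∈ Finset.Icc 1 i, (x (i + 1) - x k) :=
  bernstein_vandermonde_pivot_recurrence_general n x
end

section
/- The determinant of the Bernstein–Vandermonde matrix equals the product of its Neville diagonal pivots: det A = Π_{i=1}^{n+1} p_{i,i}, where p_{i,i} = C(n,i-1)(1-x_i)^{n-i+1}·Π_{k<i}(x_i - x_k)/Π_{k=1}^{i-1}(1-x_k), assuming 0 < x_1 < ... < x_{n+1} < 1. -/
open Finset

namespace Matrix

variable {R : Type*} [CommRing R]

def bernsteinVandermonde (n : ℕ) (x : Fin (n + 1) → R) : Matrix (Fin (n + 1)) (Fin (n + 1)) R :=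
  of fun i j => (n.choose j : R) * (1 - x i) ^ (n - (j : ℕ)) * x i ^ (j : ℕ)

theorem bernsteinVandermonde_eq_choose_mul_projVandermonde (n : ℕ) (x : Fin (n + 1) → R) :
    bernsteinVandermonde n x =
      of fun i (j : Fin (n + 1)) => (n.choose j : R) * projVandermonde x (1 - x) i j := by
  ext i j
  simp only [bernsteinVandermonde, projVandermonde_apply, of_apply, Pi.sub_apply, Pi.one_apply,
    Fin.val_rev]
  rw [show n + 1 - ((j : ℕ) + 1) = n - j by omega]
  ring

theorem det_bernsteinVandermonde (n : ℕ) (x : Fin (n + 1) → R) :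
    (bernsteinVandermonde n x).det =
      (∏ j : Fin (n + 1), (n.choose j : R)) * ∏ i, ∏ j ∈ Ioi i, (x j - x i) := by
  rw [bernsteinVandermonde_eq_choose_mul_projVandermonde, det_mul_row, det_projVandermonde]
  congr 1
  refine prod_congr rfl fun i _ => prod_congr rfl fun j _ => ?_
  simp only [Pi.sub_apply, Pi.one_apply]
  ring

end Matrix

section Reindexing

variable {M : Type*} [CommMonoid M]

theorem Finset.prod_Ico_prod_Ico_eq_prod_pow (f : ℕ → M) (a b : ℕ) :
    ∏ i ∈ Ico a b, ∏ k ∈ Ico a i, f k = ∏ k ∈ Ico a b, f k ^ (b - 1 - k) := by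
  induction b with
  | zero => simp
  | succ b ih =>
    rcases lt_or_ge b a with hba | hab
    · simp [Ico_eq_empty_of_le (Nat.succ_le_of_lt hba)]
    rw [prod_Ico_succ_top hab, prod_Ico_succ_top hab, ih, Nat.add_sub_cancel, Nat.sub_self,
      pow_zero, mul_one, ← prod_mul_distrib]
    refine prod_congr rfl fun k hk => ?_
    rw [← pow_succ]
    congr 1
    have := (mem_Ico.mp hk).2
    omega

theorem Finset.prod_prod_Ioi_eq_prod_prod_Iio {α : Type*} [Fintype α] [LinearOrder α]
    [LocallyFiniteOrderTop α] [LocallyFiniteOrderBot α] (f : α → α → M) :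
    ∏ i, ∏ j ∈ Ioi i, f i j = ∏ j, ∏ i ∈ Iio j, f i j :=
  prod_comm' fun i j => by simp

theorem Fin.prod_univ_add_one_eq_prod_Icc (f : ℕ → M) (m : ℕ) :
    ∏ i : Fin m, f (i + 1) = ∏ i ∈ Icc 1 m, f i := by
  rw [Fin.prod_univ_eq_prod_range (fun i => f (i + 1)), range_eq_Ico, prod_Ico_add']
  rfl

theorem Fin.prod_Iio_add_one_eq_prod_Ico {m : ℕ} (f : ℕ → M) (j : Fin m) :
    ∏ i ∈ Iio j, f ((i : ℕ) + 1) = ∏ k ∈ Ico 1 ((j : ℕ) + 1), f k := by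
  have h := prod_map (Iio j) Fin.valEmbedding (fun i => f (i + 1))
  rw [Fin.map_valEmbedding_Iio, Nat.Iio_eq_range, range_eq_Ico, prod_Ico_add'] at h
  exact h.symm

end Reindexing

theorem prod_pBV (n : ℕ) (x : ℕ → ℝ) (hx : ∀ k ∈ Icc 1 (n + 1), x k ≠ 1) :
    ∏ i ∈ Icc 1 (n + 1), pBV n x i =
      (∏ i ∈ Icc 1 (n + 1), (n.choose (i - 1) : ℝ)) *
        ∏ i ∈ Icc 1 (n + 1), ∏ k ∈ Ico 1 i, (x i - x k) := by
  have hIcc : ∀ i, Icc 1 (i - 1) = Ico 1 i := fun i => by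
    ext
    simp only [mem_Icc, mem_Ico]
    omega
  have hden : ∏ i ∈ Icc 1 (n + 1), ∏ k ∈ Icc 1 (i - 1), (1 - x k) =
      ∏ i ∈ Icc 1 (n + 1), (1 - x i) ^ (n + 1 - i) := by
    simp only [hIcc]
    rw [← Ico_add_one_right_eq_Icc, prod_Ico_prod_Ico_eq_prod_pow, Nat.add_sub_cancel]
  have hne : ∏ i ∈ Icc 1 (n + 1), (1 - x i) ^ (n + 1 - i) ≠ 0 :=
    prod_ne_zero_iff.mpr fun k hk => pow_ne_zero _ (sub_ne_zero.mpr (hx k hk).symm)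
  simp only [pBV]
  rw [prod_div_distrib, prod_mul_distrib, prod_mul_distrib, hden]
  field_simp

theorem bernstein_vandermonde_det_eq_prod_pivots_general (n : ℕ) (x : ℕ → ℝ)
    (hx : ∀ k, 1 ≤ k → k ≤ n + 1 → 0 < x k ∧ x k < 1)
    (A : Matrix (Fin (n + 1)) (Fin (n + 1)) ℝ)
    (hA : ∀ i j, A i j =
      (n.choose j : ℝ) * (1 - x ((i : ℕ) + 1)) ^ (n - (j : ℕ)) * x ((i : ℕ) + 1) ^ (j : ℕ)) :
    A.det = ∏ i ∈ Finset.Icc 1 (n + 1), pBV n x i := by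
  have hA' : A = Matrix.bernsteinVandermonde n (fun i => x (i + 1)) := Matrix.ext hA
  have hx1 : ∀ k ∈ Icc 1 (n + 1), x k ≠ 1 := fun k hk =>
    (hx k (mem_Icc.1 hk).1 (mem_Icc.1 hk).2).2.ne
  rw [prod_pBV n x hx1, hA', Matrix.det_bernsteinVandermonde, prod_prod_Ioi_eq_prod_prod_Iio,
    ← Fin.prod_univ_add_one_eq_prod_Icc, ← Fin.prod_univ_add_one_eq_prod_Icc]
  simp only [Nat.add_sub_cancel]
  exact congrArg _ <| prod_congr rfl fun j _ =>
    Fin.prod_Iio_add_one_eq_prod_Ico (fun k => x (j + 1) - x k) j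

/-- The determinant of the Bernstein–Vandermonde matrix equals the product of
its Neville diagonal pivots. -/
theorem bernstein_vandermonde_det_eq_prod_pivots (n : ℕ) (x : ℕ → ℝ)
    (hx : ∀ k, 1 ≤ k → k ≤ n + 1 → 0 < x k ∧ x k < 1)
    (hmono : ∀ k l, 1 ≤ k → k < l → l ≤ n + 1 → x k < x l)
    (A : Matrix (Fin (n + 1)) (Fin (n + 1)) ℝ)
    (hA : ∀ i j, A i j =
      (n.choose j : ℝ) * (1 - x ((i : ℕ) + 1)) ^ (n - (j : ℕ)) * x ((i : ℕ) + 1) ^ (j : ℕ)) :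
    A.det = ∏ i ∈ Finset.Icc 1 (n + 1), pBV n x i :=
  bernstein_vandermonde_det_eq_prod_pivots_general n x hx A hA
end
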